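/- arXiv:2401.14590 — 7 statements merged into one kernel-verified Lean document; each statement's English description precedes it below -/
import Mathlib

section
/- The odd chromatic number of the 5-cycle C5 equals 5. -/
/-! Adjacent vertices get distinct colours in an odd coloring, and so do the two neighbours of a
vertex of degree two, which would otherwise see every colour zero or two times. Any two distinct
vertices of `C₅` are adjacent or are the two neighbours of a third vertex, so every odd coloring of
`C₅` is injective; conversely, every injective colouring of a graph is odd. -/

/-- An odd coloring of a graph: a proper coloring such that every non-isolated vertex
has some color appearing an odd number of times in its neighborhood. -/
def IsOddColoring {V α : Type*} (G : SimpleGraph V) (φ : V → α) : Prop :=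
  (∀ u v : V, G.Adj u v → φ u ≠ φ v) ∧
  ∀ v : V, (∃ u, G.Adj v u) → ∃ c : α, Odd {u : V | G.Adj v u ∧ φ u = c}.ncard

/-- The odd chromatic number: the minimum number of colors in an odd coloring. -/
noncomputable def oddChromaticNumber {V : Type*} (G : SimpleGraph V) : ℕ :=
  sInf {k : ℕ | ∃ φ : V → Fin k, IsOddColoring G φ}

open SimpleGraph

section

variable {V α : Type*} {G : SimpleGraph V} {φ : V → α}

theorem IsOddColoring.of_injective (hφ : Function.Injective φ) : IsOddColoring G φ := by
  refine ⟨fun u v huv => hφ.ne huv.ne, fun v ⟨u, hvu⟩ => ⟨φ u, ?_⟩⟩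
  have hset : {w | G.Adj v w ∧ φ w = φ u} = {u} := by
    ext w
    simp only [Set.mem_ofPred_eq, Set.mem_singleton_iff, hφ.eq_iff]
    exact ⟨And.right, by rintro rfl; exact ⟨hvu, rfl⟩⟩
  rw [hset, Set.ncard_singleton]
  exact odd_one

theorem IsOddColoring.apply_ne_of_neighborSet_eq_pair (h : IsOddColoring G φ) {v a b : V}
    (hv : G.neighborSet v = {a, b}) (hab : a ≠ b) : φ a ≠ φ b := by
  intro hφ
  have hva : G.Adj v a := by simp [← mem_neighborSet, hv]
  obtain ⟨c, hc⟩ := h.2 v ⟨a, hva⟩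
  by_cases hac : φ a = c
  · have hset : {u | G.Adj v u ∧ φ u = c} = {a, b} := by
      ext u
      simp only [Set.mem_ofPred_eq, ← mem_neighborSet, hv]
      refine ⟨And.left, fun hu => ⟨hu, ?_⟩⟩
      rcases hu with rfl | rfl <;> simp [← hac, hφ]
    rw [hset, Set.ncard_pair hab] at hc
    exact Nat.not_odd_iff_even.2 even_two hc
  · have hset : {u | G.Adj v u ∧ φ u = c} = ∅ := by
      ext u
      simp only [Set.mem_ofPred_eq, ← mem_neighborSet, hv, Set.mem_empty_iff_false, iff_false]
      rintro ⟨rfl | rfl, rfl⟩ <;> simp [hφ] at hac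
    simp [hset] at hc

theorem oddChromaticNumber_eq_card_of_forall_injective [Fintype V]
    (h : ∀ (k : ℕ) (φ : V → Fin k), IsOddColoring G φ → Function.Injective φ) :
    oddChromaticNumber G = Fintype.card V := by
  have hcard : Fintype.card V ∈ {k | ∃ φ : V → Fin k, IsOddColoring G φ} :=
    ⟨Fintype.equivFin V, .of_injective (Fintype.equivFin V).injective⟩
  refine le_antisymm (Nat.sInf_le hcard) (le_csInf ⟨_, hcard⟩ ?_)
  rintro k ⟨φ, hφ⟩
  simpa using Fintype.card_le_of_injective φ (h k φ hφ)

end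

theorem cycleGraph_five_adj_or_exists_sub_one_add_one (u w : Fin 5) (huw : u ≠ w) :
    (cycleGraph 5).Adj u w ∨ ∃ v, (u = v - 1 ∧ w = v + 1) ∨ (u = v + 1 ∧ w = v - 1) := by
  revert u w; decide

theorem IsOddColoring.injective_of_cycleGraph_five {α : Type*} {φ : Fin 5 → α}
    (h : IsOddColoring (cycleGraph 5) φ) : Function.Injective φ := by
  intro u w hφ
  by_contra huw
  rcases cycleGraph_five_adj_or_exists_sub_one_add_one u w huw with hadj | ⟨v, ⟨rfl, rfl⟩ | ⟨rfl, rfl⟩⟩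
  · exact h.1 u w hadj hφ
  · exact h.apply_ne_of_neighborSet_eq_pair cycleGraph_neighborSet huw hφ
  · exact h.apply_ne_of_neighborSet_eq_pair cycleGraph_neighborSet (Ne.symm huw) hφ.symm

/-- The odd chromatic number of the 5-cycle equals 5. -/
theorem oddChromaticNumber_cycleGraph_five :
    oddChromaticNumber (SimpleGraph.cycleGraph 5) = 5 := by
  rw [oddChromaticNumber_eq_card_of_forall_injective fun _ _ h => h.injective_of_cycleGraph_five,
    Fintype.card_fin]
end

section
/- Let G be a vertex-minimal graph (with respect to the number of vertices) for which no odd 4-coloring exists. Then G has no vertex of degree 1. -/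
/-!
Delete the degree-one vertex `v`, with neighbour `u`, and odd-colour `G - v` by minimality.
Give `v` a colour different from that of `u` and from an odd colour `c` of `u` in `G - v`;
with four colours such a colour exists. Then `v` sees its single neighbour's colour once, `u`
keeps `c` as an odd colour (or, if `v` is its only neighbour, sees the colour of `v` once), and
no other neighbourhood changes.
-/

lemma exists_ne_ne_of_two_lt_card {α : Type*} [Fintype α] (h : 2 < Fintype.card α) (x y : α) :
    ∃ a, a ≠ x ∧ a ≠ y := by
  classical
  obtain ⟨a, -, ha⟩ := Finset.exists_mem_notMem_of_card_lt_card (s := {x, y}) (t := Finset.univ)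
    (Finset.card_le_two.trans_lt (by rwa [Finset.card_univ]))
  exact ⟨a, by simpa only [Finset.mem_insert, Finset.mem_singleton, not_or] using ha⟩

namespace SimpleGraph

variable {V α : Type*} {G : SimpleGraph V}

lemma odd_ncard_setOf_adj_of_neighborSet_eq_singleton {x z : V} (h : G.neighborSet x = {z})
    (ψ : V → α) : Odd {y | G.Adj x y ∧ ψ y = ψ z}.ncard := by
  have hset : {y | G.Adj x y ∧ ψ y = ψ z} = {z} := by
    ext y
    have hy : G.Adj x y ↔ y = z := Set.ext_iff.1 h y
    simp only [Set.mem_ofPred_eq, Set.mem_singleton_iff, hy, and_iff_left_iff_imp]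
    rintro rfl
    rfl
  rw [hset, Set.ncard_singleton]
  exact odd_one

section ExtendCompl

variable {v : V} (φ : ({v}ᶜ : Set V) → α) (a : α)

lemma extend_compl_singleton_self : Function.extend (↑) φ (fun _ ↦ a) v = a :=
  Function.extend_apply' _ _ _ (by simp)

lemma extend_compl_singleton_of_ne {x : V} (hx : x ≠ v) :
    Function.extend (↑) φ (fun _ ↦ a) x = φ ⟨x, hx⟩ :=
  Subtype.val_injective.extend_apply φ _ ⟨x, hx⟩

lemma ncard_setOf_adj_extend_compl_singleton {x : V} (hx : x ≠ v) {c : α}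
    (h : G.Adj x v → a ≠ c) :
    {y | G.Adj x y ∧ Function.extend (↑) φ (fun _ ↦ a) y = c}.ncard =
      {w | (G.induce {v}ᶜ).Adj ⟨x, hx⟩ w ∧ φ w = c}.ncard := by
  rw [← Set.ncard_image_of_injective _ Subtype.val_injective]
  congr 1
  ext y
  simp only [Set.mem_ofPred_eq, Set.mem_image, Subtype.exists, comap_adj,
    Function.Embedding.subtype_apply, exists_and_right, exists_eq_right]
  by_cases hy : y = v
  · subst hy
    simpa only [extend_compl_singleton_self, Set.mem_compl_singleton_iff, ne_eq,
      not_true_eq_false, IsEmpty.exists_iff, iff_false, not_and] using h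
  · rw [extend_compl_singleton_of_ne φ a hy]
    exact ⟨fun hxy ↦ ⟨hy, hxy⟩, fun ⟨_, hxy⟩ ↦ hxy⟩

lemma extend_compl_singleton_ne_of_adj {u : V} (hv : G.neighborSet v = {u}) (hu : u ≠ v)
    (hφ : ∀ x y, (G.induce {v}ᶜ).Adj x y → φ x ≠ φ y) (ha : a ≠ φ ⟨u, hu⟩) {x y : V}
    (hxy : G.Adj x y) :
    Function.extend (↑) φ (fun _ ↦ a) x ≠ Function.extend (↑) φ (fun _ ↦ a) y := by
  have hadj {y : V} : G.Adj v y ↔ y = u := Set.ext_iff.1 hv y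
  by_cases hx : x = v
  · subst hx
    obtain rfl := hadj.1 hxy
    rwa [extend_compl_singleton_self, extend_compl_singleton_of_ne φ a hu]
  by_cases hy : y = v
  · subst hy
    obtain rfl := hadj.1 hxy.symm
    rw [extend_compl_singleton_self, extend_compl_singleton_of_ne φ a hx]
    exact ha.symm
  rw [extend_compl_singleton_of_ne φ a hx, extend_compl_singleton_of_ne φ a hy]
  exact hφ _ _ hxy

end ExtendCompl

end SimpleGraph

open SimpleGraph

theorem IsOddColoring.extend_compl_singleton {V α : Type*} {G : SimpleGraph V} {v u : V}
    (hv : G.neighborSet v = {u}) (hu : u ≠ v) {φ : ({v}ᶜ : Set V) → α}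
    (hφ : IsOddColoring (G.induce {v}ᶜ) φ) {a c : α}
    (hc : (∃ w, (G.induce {v}ᶜ).Adj ⟨u, hu⟩ w) →
      Odd {w | (G.induce {v}ᶜ).Adj ⟨u, hu⟩ w ∧ φ w = c}.ncard)
    (hau : a ≠ φ ⟨u, hu⟩) (hac : a ≠ c) :
    IsOddColoring G (Function.extend (↑) φ (fun _ ↦ a)) := by
  have hadj {y : V} : G.Adj v y ↔ y = u := Set.ext_iff.1 hv y
  refine ⟨fun x y ↦ extend_compl_singleton_ne_of_adj φ a hv hu hφ.1 hau, fun x hx ↦ ?_⟩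
  by_cases hxv : x = v
  · subst hxv
    exact ⟨_, odd_ncard_setOf_adj_of_neighborSet_eq_singleton hv _⟩
  by_cases hxu : x = u
  · subst hxu
    by_cases hiso : ∃ w, (G.induce {v}ᶜ).Adj ⟨x, hu⟩ w
    · exact ⟨c, by rw [ncard_setOf_adj_extend_compl_singleton φ a hxv fun _ ↦ hac]; exact hc hiso⟩
    have hnbr : G.neighborSet x = {v} := by
      ext y
      refine ⟨fun hxy ↦ by_contra fun hy ↦ hiso ⟨⟨y, hy⟩, hxy⟩, ?_⟩
      rintro rfl
      exact (hadj.2 rfl).symm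
    refine ⟨a, ?_⟩
    simpa only [extend_compl_singleton_self] using
      odd_ncard_setOf_adj_of_neighborSet_eq_singleton hnbr (Function.extend (↑) φ (fun _ ↦ a))
  have hxv' : ¬ G.Adj x v := fun h ↦ hxu (hadj.1 h.symm)
  obtain ⟨y, hxy⟩ := hx
  have hy : y ≠ v := by
    rintro rfl
    exact hxv' hxy
  obtain ⟨c', hc'⟩ := hφ.2 ⟨x, hxv⟩ ⟨⟨y, hy⟩, hxy⟩
  exact ⟨c', by rwa [ncard_setOf_adj_extend_compl_singleton φ a hxv fun h ↦ (hxv' h).elim]⟩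

theorem exists_isOddColoring_of_neighborSet_eq_singleton {V α : Type*} [Fintype α]
    (hα : 2 < Fintype.card α) {G : SimpleGraph V} {v u : V} (hv : G.neighborSet v = {u})
    {φ : ({v}ᶜ : Set V) → α} (hφ : IsOddColoring (G.induce {v}ᶜ) φ) :
    ∃ ψ : V → α, IsOddColoring G ψ := by
  have hu : u ≠ v := (G.ne_of_adj ((Set.ext_iff.1 hv u).2 rfl)).symm
  obtain ⟨c, hc⟩ : ∃ c, (∃ w, (G.induce {v}ᶜ).Adj ⟨u, hu⟩ w) →
      Odd {w | (G.induce {v}ᶜ).Adj ⟨u, hu⟩ w ∧ φ w = c}.ncard := by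
    by_cases hiso : ∃ w, (G.induce {v}ᶜ).Adj ⟨u, hu⟩ w
    · obtain ⟨c, hc⟩ := hφ.2 _ hiso
      exact ⟨c, fun _ ↦ hc⟩
    · exact ⟨φ ⟨u, hu⟩, fun h ↦ (hiso h).elim⟩
  obtain ⟨a, hau, hac⟩ := exists_ne_ne_of_two_lt_card hα (φ ⟨u, hu⟩) c
  exact ⟨_, hφ.extend_compl_singleton hv hu hc hau hac⟩

/-- A vertex-minimal graph admitting no odd 4-coloring has no vertex of
degree 1. -/
theorem minimal_no_odd4_has_no_degree_one_vertex
    {V : Type} [Fintype V] (G : SimpleGraph V)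
    (hno : ¬ ∃ φ : V → Fin 4, IsOddColoring G φ)
    (hmin : ∀ (W : Type) [Fintype W] (H : SimpleGraph W),
      Fintype.card W < Fintype.card V → ∃ φ : W → Fin 4, IsOddColoring H φ) :
    ∀ v : V, (G.neighborSet v).ncard ≠ 1 := by
  classical
  intro v hv
  obtain ⟨u, hu⟩ := Set.ncard_eq_one.1 hv
  obtain ⟨φ, hφ⟩ := hmin _ (G.induce {v}ᶜ) (Fintype.card_subtype_lt (x := v) (by simp))
  exact hno (exists_isOddColoring_of_neighborSet_eq_singleton (by simp) hu hφ)
end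

section
/- Let G be a graph, let x1x2 be a 2-thread (a path of two degree-2 vertices) with anchors y1 and y2 (y1 adjacent to x1, y2 adjacent to x2, and y1, y2 of degree at least 3), and let φ be an odd 4-coloring of G − {x1, x2} in which y1 and y2 each have a unique odd color φ_o(y1), φ_o(y2) in their neighborhoods within G − {x1,x2}. If φ(y1) = φ(y2) or φ_o(y1) ≠ φ_o(y2), then φ extends to an odd 4-coloring of G. -/
/-- An odd coloring of the subgraph of `G` induced on the set `S`. -/
def OddColoringOn {V α : Type*} (G : SimpleGraph V) (S : Set V) (φ : V → α) : Prop :=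
  (∀ u ∈ S, ∀ v ∈ S, G.Adj u v → φ u ≠ φ v) ∧
  ∀ v ∈ S, (∃ u ∈ S, G.Adj v u) →
    ∃ c : α, Odd {u : V | u ∈ S ∧ G.Adj v u ∧ φ u = c}.ncard

lemma choose_colors (p1 p2 d1 d2 : Fin 4) (h1 : d1 ≠ p1) (h2 : d2 ≠ p2)
    (h : p1 = p2 ∨ d1 ≠ d2) :
    ∃ a b : Fin 4, a ≠ b ∧ a ≠ p1 ∧ a ≠ p2 ∧ a ≠ d1 ∧ b ≠ p1 ∧ b ≠ p2 ∧ b ≠ d2 := by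
  revert h1 h2 h
  revert p1 p2 d1 d2
  decide

/-- Let `x1x2` be a 2-thread with anchors `y1, y2`, and let `φ` be an odd
4-coloring of `G − {x1,x2}` in which `y1`, `y2` have unique odd colors `c1`, `c2`.
If `φ(y1) = φ(y2)` or `c1 ≠ c2`, then `φ` extends to an odd 4-coloring of `G`. -/
theorem two_thread_extension
    {V : Type*} [Fintype V] (G : SimpleGraph V) (x1 x2 y1 y2 : V)
    (hnd : ([x1, x2, y1, y2] : List V).Nodup)
    (h1 : G.Adj y1 x1) (h2 : G.Adj x1 x2) (h3 : G.Adj x2 y2)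
    (hdx1 : (G.neighborSet x1).ncard = 2) (hdx2 : (G.neighborSet x2).ncard = 2)
    (hdy1 : 3 ≤ (G.neighborSet y1).ncard) (hdy2 : 3 ≤ (G.neighborSet y2).ncard)
    (φ : V → Fin 4) (c1 c2 : Fin 4)
    (hφ : OddColoringOn G {v : V | v ≠ x1 ∧ v ≠ x2} φ)
    (huniq1 : ∀ c : Fin 4,
      Odd {u : V | (u ≠ x1 ∧ u ≠ x2) ∧ G.Adj y1 u ∧ φ u = c}.ncard ↔ c = c1)
    (huniq2 : ∀ c : Fin 4,
      Odd {u : V | (u ≠ x1 ∧ u ≠ x2) ∧ G.Adj y2 u ∧ φ u = c}.ncard ↔ c = c2)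
    (hcond : φ y1 = φ y2 ∨ c1 ≠ c2) :
    ∃ ψ : V → Fin 4, (∀ v : V, v ≠ x1 → v ≠ x2 → ψ v = φ v) ∧ IsOddColoring G ψ := by
  simp only [List.nodup_cons, List.mem_cons, List.mem_singleton, List.not_mem_nil,
    List.nodup_nil, or_false, not_or] at hnd
  obtain ⟨⟨hx12, hx1y1, hx1y2⟩, ⟨hx2y1, hx2y2⟩, hy12, -⟩ := hnd
  -- neighbor sets of x1, x2
  have hN1 : G.neighborSet x1 = {y1, x2} := by
    refine (Set.eq_of_subset_of_ncard_le ?_ ?_).symm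
    · rintro u (rfl | rfl)
      · exact h1.symm
      · exact h2
    · rw [hdx1, Set.ncard_pair (fun h => hx2y1 h.symm)]
  have hN2 : G.neighborSet x2 = {x1, y2} := by
    refine (Set.eq_of_subset_of_ncard_le ?_ ?_).symm
    · rintro u (rfl | rfl)
      · exact h2.symm
      · exact h3
    · rw [hdx2, Set.ncard_pair hx1y2]
  have hadj1 : ∀ u, G.Adj x1 u ↔ (u = y1 ∨ u = x2) := by
    intro u
    rw [← SimpleGraph.mem_neighborSet, hN1]
    simp [Set.mem_insert_iff]
  have hadj2 : ∀ u, G.Adj x2 u ↔ (u = x1 ∨ u = y2) := by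
    intro u
    rw [← SimpleGraph.mem_neighborSet, hN2]
    simp [Set.mem_insert_iff]
  have hy1S : y1 ∈ {v : V | v ≠ x1 ∧ v ≠ x2} := ⟨fun h => hx1y1 h.symm, fun h => hx2y1 h.symm⟩
  have hy2S : y2 ∈ {v : V | v ≠ x1 ∧ v ≠ x2} := ⟨fun h => hx1y2 h.symm, fun h => hx2y2 h.symm⟩
  -- c1 ≠ φ y1 and c2 ≠ φ y2
  have hc1 : c1 ≠ φ y1 := by
    have hodd := (huniq1 c1).mpr rfl
    have hne : {u : V | (u ≠ x1 ∧ u ≠ x2) ∧ G.Adj y1 u ∧ φ u = c1}.Nonempty := by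
      apply Set.nonempty_of_ncard_ne_zero
      intro h
      rw [h] at hodd
      exact (Nat.not_odd_iff_even.mpr Even.zero) hodd
    obtain ⟨u, huS, huadj, huc⟩ := hne
    rw [← huc]
    exact fun h => hφ.1 y1 hy1S u huS huadj h.symm
  have hc2 : c2 ≠ φ y2 := by
    have hodd := (huniq2 c2).mpr rfl
    have hne : {u : V | (u ≠ x1 ∧ u ≠ x2) ∧ G.Adj y2 u ∧ φ u = c2}.Nonempty := by
      apply Set.nonempty_of_ncard_ne_zero
      intro h
      rw [h] at hodd
      exact (Nat.not_odd_iff_even.mpr Even.zero) hodd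
    obtain ⟨u, huS, huadj, huc⟩ := hne
    rw [← huc]
    exact fun h => hφ.1 y2 hy2S u huS huadj h.symm
  classical
  obtain ⟨a, b, hab, hap1, hap2, hac1, hbp1, hbp2, hbc2⟩ :=
    choose_colors (φ y1) (φ y2) c1 c2 hc1 hc2 hcond
  set ψ : V → Fin 4 := fun v => if v = x1 then a else if v = x2 then b else φ v with hψ
  have hψ1 : ψ x1 = a := by simp [hψ]
  have hψ2 : ψ x2 = b := by
    simp only [hψ]
    rw [if_neg (fun h => hx12 h.symm)]
    simp
  have hψS : ∀ v, v ≠ x1 → v ≠ x2 → ψ v = φ v := by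
    intro v h1' h2'
    simp [hψ, h1', h2']
  have hψy1 : ψ y1 = φ y1 := hψS y1 hy1S.1 hy1S.2
  have hψy2 : ψ y2 = φ y2 := hψS y2 hy2S.1 hy2S.2
  refine ⟨ψ, hψS, ?_, ?_⟩
  · -- properness
    intro u v huv
    by_cases hu1 : u = x1
    · subst hu1
      rcases (hadj1 v).mp huv with rfl | rfl
      · rw [hψ1, hψy1]; exact hap1
      · rw [hψ1, hψ2]; exact hab
    by_cases hu2 : u = x2
    · subst hu2
      rcases (hadj2 v).mp huv with rfl | rfl
      · rw [hψ2, hψ1]; exact fun h => hab h.symm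
      · rw [hψ2, hψy2]; exact hbp2
    by_cases hv1 : v = x1
    · subst hv1
      rcases (hadj1 u).mp huv.symm with rfl | rfl
      · rw [hψ1, hψy1]; exact fun h => hap1 h.symm
      · exact absurd rfl hu2
    by_cases hv2 : v = x2
    · subst hv2
      rcases (hadj2 u).mp huv.symm with rfl | rfl
      · exact absurd rfl hu1
      · rw [hψ2, hψy2]; exact fun h => hbp2 h.symm
    rw [hψS u hu1 hu2, hψS v hv1 hv2]
    exact hφ.1 u ⟨hu1, hu2⟩ v ⟨hv1, hv2⟩ huv
  · -- odd condition
    intro v hv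
    by_cases hv1 : v = x1
    · rw [hv1]
      refine ⟨φ y1, ?_⟩
      have : {u : V | G.Adj x1 u ∧ ψ u = φ y1} = {y1} := by
        ext u
        simp only [Set.mem_setOf_eq, Set.mem_singleton_iff]
        constructor
        · rintro ⟨hadj, hc⟩
          rcases (hadj1 u).mp hadj with rfl | rfl
          · rfl
          · rw [hψ2] at hc; exact absurd hc hbp1
        · rintro rfl
          exact ⟨h1.symm, hψy1⟩
      rw [this, Set.ncard_singleton]
      exact odd_one
    by_cases hv2 : v = x2
    · rw [hv2]
      refine ⟨φ y2, ?_⟩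
      have : {u : V | G.Adj x2 u ∧ ψ u = φ y2} = {y2} := by
        ext u
        simp only [Set.mem_setOf_eq, Set.mem_singleton_iff]
        constructor
        · rintro ⟨hadj, hc⟩
          rcases (hadj2 u).mp hadj with rfl | rfl
          · rw [hψ1] at hc; exact absurd hc hap2
          · rfl
        · rintro rfl
          exact ⟨h3, hψy2⟩
      rw [this, Set.ncard_singleton]
      exact odd_one
    by_cases hvy1 : v = y1
    · rw [hvy1]
      refine ⟨c1, ?_⟩
      have : {u : V | G.Adj y1 u ∧ ψ u = c1}
          = {u : V | (u ≠ x1 ∧ u ≠ x2) ∧ G.Adj y1 u ∧ φ u = c1} := by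
        ext u
        simp only [Set.mem_setOf_eq]
        constructor
        · rintro ⟨hadj, hc⟩
          have hu1 : u ≠ x1 := by
            rintro rfl
            rw [hψ1] at hc
            exact hac1 hc
          have hu2 : u ≠ x2 := by
            rintro rfl
            rcases (hadj2 y1).mp hadj.symm with rfl | rfl
            · exact hx1y1 rfl
            · exact hy12 rfl
          rw [hψS u hu1 hu2] at hc
          exact ⟨⟨hu1, hu2⟩, hadj, hc⟩
        · rintro ⟨⟨hu1, hu2⟩, hadj, hc⟩
          exact ⟨hadj, by rw [hψS u hu1 hu2]; exact hc⟩
      rw [this]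
      exact (huniq1 c1).mpr rfl
    by_cases hvy2 : v = y2
    · rw [hvy2]
      refine ⟨c2, ?_⟩
      have : {u : V | G.Adj y2 u ∧ ψ u = c2}
          = {u : V | (u ≠ x1 ∧ u ≠ x2) ∧ G.Adj y2 u ∧ φ u = c2} := by
        ext u
        simp only [Set.mem_setOf_eq]
        constructor
        · rintro ⟨hadj, hc⟩
          have hu1 : u ≠ x1 := by
            rintro rfl
            rcases (hadj1 y2).mp hadj.symm with rfl | rfl
            · exact hy12 rfl
            · exact hx2y2 rfl
          have hu2 : u ≠ x2 := by
            rintro rfl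
            rw [hψ2] at hc
            exact hbc2 hc
          rw [hψS u hu1 hu2] at hc
          exact ⟨⟨hu1, hu2⟩, hadj, hc⟩
        · rintro ⟨⟨hu1, hu2⟩, hadj, hc⟩
          exact ⟨hadj, by rw [hψS u hu1 hu2]; exact hc⟩
      rw [this]
      exact (huniq2 c2).mpr rfl
    -- generic v: not adjacent to x1 or x2
    have hnb : ∀ u, G.Adj v u → u ≠ x1 ∧ u ≠ x2 := by
      intro u hadj
      constructor
      · rintro rfl
        rcases (hadj1 v).mp hadj.symm with rfl | rfl
        · exact hvy1 rfl
        · exact hv2 rfl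
      · rintro rfl
        rcases (hadj2 v).mp hadj.symm with rfl | rfl
        · exact hv1 rfl
        · exact hvy2 rfl
    obtain ⟨w, hw⟩ := hv
    obtain ⟨c, hc⟩ := hφ.2 v ⟨hv1, hv2⟩ ⟨w, hnb w hw, hw⟩
    refine ⟨c, ?_⟩
    have : {u : V | G.Adj v u ∧ ψ u = c}
        = {u : V | u ∈ {v : V | v ≠ x1 ∧ v ≠ x2} ∧ G.Adj v u ∧ φ u = c} := by
      ext u
      simp only [Set.mem_setOf_eq]
      constructor
      · rintro ⟨hadj, hcu⟩
        obtain ⟨hu1, hu2⟩ := hnb u hadj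
        rw [hψS u hu1 hu2] at hcu
        exact ⟨⟨hu1, hu2⟩, hadj, hcu⟩
      · rintro ⟨⟨hu1, hu2⟩, hadj, hcu⟩
        exact ⟨hadj, by rw [hψS u hu1 hu2]; exact hcu⟩
    rw [this]
    exact hc
end

section
/- Let G be a graph, let x1x2x3 be a 3-thread with anchors y1 (adjacent to x1) and y2 (adjacent to x3), and let φ be an odd 4-coloring of G − {x1, x2, x3} in which y1 and y2 each have a unique odd color φ_o(y1), φ_o(y2). If φ_o(y1) ≠ φ(y2) or φ_o(y2) ≠ φ(y1), then φ extends to an odd 4-coloring of G. -/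
set_option synthInstance.maxSize 400 in
set_option synthInstance.maxHeartbeats 1000000 in
set_option maxHeartbeats 1000000 in
lemma fin4_choice : ∀ p q c1 c2 : Fin 4, (c1 ≠ p ∧ c2 ≠ q ∧ (c1 ≠ q ∨ c2 ≠ p)) →
    ∃ a b c : Fin 4, a ≠ p ∧ a ≠ c1 ∧ a ≠ b ∧ a ≠ c ∧ b ≠ p ∧ b ≠ q ∧ b ≠ c ∧ c ≠ q ∧ c ≠ c2 := by
  decide

/-- Let `x1x2x3` be a 3-thread with anchors `y1, y2`, and let `φ` be an
odd 4-coloring of `G − {x1,x2,x3}` in which `y1`, `y2` have unique odd colors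
`c1`, `c2`.  If `c1 ≠ φ(y2)` or `c2 ≠ φ(y1)`, then `φ` extends to an odd 4-coloring
of `G`. -/
theorem three_thread_extension
    {V : Type*} [Fintype V] (G : SimpleGraph V) (x1 x2 x3 y1 y2 : V)
    (hnd : ([x1, x2, x3, y1, y2] : List V).Nodup)
    (h1 : G.Adj y1 x1) (h2 : G.Adj x1 x2) (h3 : G.Adj x2 x3) (h4 : G.Adj x3 y2)
    (hdx1 : (G.neighborSet x1).ncard = 2) (hdx2 : (G.neighborSet x2).ncard = 2)
    (hdx3 : (G.neighborSet x3).ncard = 2)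
    (hdy1 : 3 ≤ (G.neighborSet y1).ncard) (hdy2 : 3 ≤ (G.neighborSet y2).ncard)
    (φ : V → Fin 4) (c1 c2 : Fin 4)
    (hφ : OddColoringOn G {v : V | v ≠ x1 ∧ v ≠ x2 ∧ v ≠ x3} φ)
    (huniq1 : ∀ c : Fin 4,
      Odd {u : V | (u ≠ x1 ∧ u ≠ x2 ∧ u ≠ x3) ∧ G.Adj y1 u ∧ φ u = c}.ncard ↔ c = c1)
    (huniq2 : ∀ c : Fin 4,
      Odd {u : V | (u ≠ x1 ∧ u ≠ x2 ∧ u ≠ x3) ∧ G.Adj y2 u ∧ φ u = c}.ncard ↔ c = c2)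
    (hcond : c1 ≠ φ y2 ∨ c2 ≠ φ y1) :
    ∃ ψ : V → Fin 4,
      (∀ v : V, v ≠ x1 → v ≠ x2 → v ≠ x3 → ψ v = φ v) ∧ IsOddColoring G ψ := by
  classical
  simp only [List.nodup_cons, List.mem_cons, List.not_mem_nil, or_false, List.nodup_nil,
    not_or, List.mem_singleton] at hnd
  obtain ⟨⟨n12, n13, n1y1, n1y2⟩, ⟨n23, n2y1, n2y2⟩, ⟨n3y1, n3y2⟩, ny12, -⟩ := hnd
  -- neighbor sets of the thread vertices
  have hN1 : G.neighborSet x1 = {y1, x2} := by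
    refine (Set.eq_of_subset_of_ncard_le ?_ ?_ (Set.toFinite _)).symm
    · intro u hu
      rcases hu with h | h
      · exact h ▸ h1.symm
      · exact (Set.mem_singleton_iff.mp h) ▸ h2
    · rw [hdx1, Set.ncard_pair (Ne.symm n2y1)]
  have hN2 : G.neighborSet x2 = {x1, x3} := by
    refine (Set.eq_of_subset_of_ncard_le ?_ ?_ (Set.toFinite _)).symm
    · intro u hu
      rcases hu with h | h
      · exact h ▸ h2.symm
      · exact (Set.mem_singleton_iff.mp h) ▸ h3
    · rw [hdx2, Set.ncard_pair n13]
  have hN3 : G.neighborSet x3 = {x2, y2} := by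
    refine (Set.eq_of_subset_of_ncard_le ?_ ?_ (Set.toFinite _)).symm
    · intro u hu
      rcases hu with h | h
      · exact h ▸ h3.symm
      · exact (Set.mem_singleton_iff.mp h) ▸ h4
    · rw [hdx3, Set.ncard_pair n2y2]
  have hadj1 : ∀ u, G.Adj x1 u ↔ (u = y1 ∨ u = x2) := by
    intro u
    rw [← SimpleGraph.mem_neighborSet, hN1]
    simp [Set.mem_insert_iff]
  have hadj2 : ∀ u, G.Adj x2 u ↔ (u = x1 ∨ u = x3) := by
    intro u
    rw [← SimpleGraph.mem_neighborSet, hN2]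
    simp [Set.mem_insert_iff]
  have hadj3 : ∀ u, G.Adj x3 u ↔ (u = x2 ∨ u = y2) := by
    intro u
    rw [← SimpleGraph.mem_neighborSet, hN3]
    simp [Set.mem_insert_iff]
  -- non-adjacencies
  have ny1x2 : ¬ G.Adj y1 x2 := by
    intro h
    rcases (hadj2 y1).1 h.symm with h' | h'
    · exact n1y1 h'.symm
    · exact n3y1 h'.symm
  have ny1x3 : ¬ G.Adj y1 x3 := by
    intro h
    rcases (hadj3 y1).1 h.symm with h' | h'
    · exact n2y1 h'.symm
    · exact ny12 h'
  have ny2x1 : ¬ G.Adj y2 x1 := by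
    intro h
    rcases (hadj1 y2).1 h.symm with h' | h'
    · exact ny12 h'.symm
    · exact n2y2 h'.symm
  have ny2x2 : ¬ G.Adj y2 x2 := by
    intro h
    rcases (hadj2 y2).1 h.symm with h' | h'
    · exact n1y2 h'.symm
    · exact n3y2 h'.symm
  -- c1 ≠ φ y1 and c2 ≠ φ y2
  have hy1S : y1 ≠ x1 ∧ y1 ≠ x2 ∧ y1 ≠ x3 := ⟨Ne.symm n1y1, Ne.symm n2y1, Ne.symm n3y1⟩
  have hy2S : y2 ≠ x1 ∧ y2 ≠ x2 ∧ y2 ≠ x3 := ⟨Ne.symm n1y2, Ne.symm n2y2, Ne.symm n3y2⟩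
  have hc1 : c1 ≠ φ y1 := by
    have ho := (huniq1 c1).2 rfl
    have hne : {u : V | (u ≠ x1 ∧ u ≠ x2 ∧ u ≠ x3) ∧ G.Adj y1 u ∧ φ u = c1}.Nonempty := by
      apply Set.nonempty_of_ncard_ne_zero
      exact ho.pos.ne'
    obtain ⟨u, hu⟩ := hne
    rw [← hu.2.2]
    exact Ne.symm (hφ.1 y1 hy1S u hu.1 hu.2.1)
  have hc2 : c2 ≠ φ y2 := by
    have ho := (huniq2 c2).2 rfl
    have hne : {u : V | (u ≠ x1 ∧ u ≠ x2 ∧ u ≠ x3) ∧ G.Adj y2 u ∧ φ u = c2}.Nonempty := by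
      apply Set.nonempty_of_ncard_ne_zero
      exact ho.pos.ne'
    obtain ⟨u, hu⟩ := hne
    rw [← hu.2.2]
    exact Ne.symm (hφ.1 y2 hy2S u hu.1 hu.2.1)
  -- choose the three new colors
  obtain ⟨a, b, c, hap, hac1, hab, hac, hbp, hbq, hbc, hcq, hcc2⟩ :=
    fin4_choice (φ y1) (φ y2) c1 c2 ⟨hc1, hc2, hcond⟩
  set ψ : V → Fin 4 := fun v => if v = x1 then a else if v = x2 then b else
    if v = x3 then c else φ v with hψdef
  have hψ1 : ψ x1 = a := by simp [hψdef]
  have hψ2 : ψ x2 = b := by simp [hψdef, Ne.symm n12]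
  have hψ3 : ψ x3 = c := by simp [hψdef, Ne.symm n13, Ne.symm n23]
  have hψS : ∀ v, v ≠ x1 → v ≠ x2 → v ≠ x3 → ψ v = φ v := by
    intro v hv1 hv2 hv3; simp [hψdef, hv1, hv2, hv3]
  have hψy1 : ψ y1 = φ y1 := hψS y1 hy1S.1 hy1S.2.1 hy1S.2.2
  have hψy2 : ψ y2 = φ y2 := hψS y2 hy2S.1 hy2S.2.1 hy2S.2.2
  refine ⟨ψ, hψS, ?_, ?_⟩
  · -- properness
    have key : ∀ u v, G.Adj u v → (u = x1 ∨ u = x2 ∨ u = x3) → ψ u ≠ ψ v := by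
      rintro u v huv (rfl | rfl | rfl)
      · rcases (hadj1 v).1 huv with rfl | rfl
        · rw [hψ1, hψy1]; exact hap
        · rw [hψ1, hψ2]; exact hab
      · rcases (hadj2 v).1 huv with rfl | rfl
        · rw [hψ2, hψ1]; exact Ne.symm hab
        · rw [hψ2, hψ3]; exact hbc
      · rcases (hadj3 v).1 huv with rfl | rfl
        · rw [hψ3, hψ2]; exact Ne.symm hbc
        · rw [hψ3, hψy2]; exact hcq
    intro u v huv
    by_cases hu : u = x1 ∨ u = x2 ∨ u = x3
    · exact key u v huv hu
    · by_cases hv : v = x1 ∨ v = x2 ∨ v = x3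
      · exact (key v u huv.symm hv).symm
      · push_neg at hu hv
        rw [hψS u hu.1 hu.2.1 hu.2.2, hψS v hv.1 hv.2.1 hv.2.2]
        exact hφ.1 u hu v hv huv
  · -- odd condition
    intro v hv
    rcases eq_or_ne v x1 with h | hv1
    · subst h
      refine ⟨φ y1, ?_⟩
      have hset : {u : V | G.Adj v u ∧ ψ u = φ y1} = {y1} := by
        ext u
        simp only [Set.mem_setOf_eq, Set.mem_singleton_iff]
        constructor
        · rintro ⟨hadj, hcol⟩
          rcases (hadj1 u).1 hadj with rfl | rfl
          · rfl
          · rw [hψ2] at hcol; exact absurd hcol hbp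
        · rintro rfl; exact ⟨h1.symm, hψy1⟩
      rw [hset, Set.ncard_singleton]; exact odd_one
    rcases eq_or_ne v x2 with h | hv2
    · subst h
      refine ⟨a, ?_⟩
      have hset : {u : V | G.Adj v u ∧ ψ u = a} = {x1} := by
        ext u
        simp only [Set.mem_setOf_eq, Set.mem_singleton_iff]
        constructor
        · rintro ⟨hadj, hcol⟩
          rcases (hadj2 u).1 hadj with rfl | rfl
          · rfl
          · rw [hψ3] at hcol; exact absurd hcol.symm hac
        · rintro rfl; exact ⟨h2.symm, hψ1⟩
      rw [hset, Set.ncard_singleton]; exact odd_one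
    rcases eq_or_ne v x3 with h | hv3
    · subst h
      refine ⟨φ y2, ?_⟩
      have hset : {u : V | G.Adj v u ∧ ψ u = φ y2} = {y2} := by
        ext u
        simp only [Set.mem_setOf_eq, Set.mem_singleton_iff]
        constructor
        · rintro ⟨hadj, hcol⟩
          rcases (hadj3 u).1 hadj with rfl | rfl
          · rw [hψ2] at hcol; exact absurd hcol hbq
          · rfl
        · rintro rfl; exact ⟨h4, hψy2⟩
      rw [hset, Set.ncard_singleton]; exact odd_one
    rcases eq_or_ne v y1 with h | hvy1
    · subst h
      refine ⟨c1, ?_⟩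
      have hset : {u : V | G.Adj v u ∧ ψ u = c1}
          = {u : V | (u ≠ x1 ∧ u ≠ x2 ∧ u ≠ x3) ∧ G.Adj v u ∧ φ u = c1} := by
        ext u
        simp only [Set.mem_setOf_eq]
        constructor
        · rintro ⟨hadj, hcol⟩
          have hu1 : u ≠ x1 := by rintro rfl; rw [hψ1] at hcol; exact hac1 hcol
          have hu2 : u ≠ x2 := by rintro rfl; exact ny1x2 hadj
          have hu3 : u ≠ x3 := by rintro rfl; exact ny1x3 hadj
          exact ⟨⟨hu1, hu2, hu3⟩, hadj, by rw [← hψS u hu1 hu2 hu3]; exact hcol⟩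
        · rintro ⟨⟨hu1, hu2, hu3⟩, hadj, hcol⟩
          exact ⟨hadj, by rw [hψS u hu1 hu2 hu3]; exact hcol⟩
      rw [hset]
      exact (huniq1 c1).2 rfl
    rcases eq_or_ne v y2 with h | hvy2
    · subst h
      refine ⟨c2, ?_⟩
      have hset : {u : V | G.Adj v u ∧ ψ u = c2}
          = {u : V | (u ≠ x1 ∧ u ≠ x2 ∧ u ≠ x3) ∧ G.Adj v u ∧ φ u = c2} := by
        ext u
        simp only [Set.mem_setOf_eq]
        constructor
        · rintro ⟨hadj, hcol⟩
          have hu1 : u ≠ x1 := by rintro rfl; exact ny2x1 hadj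
          have hu2 : u ≠ x2 := by rintro rfl; exact ny2x2 hadj
          have hu3 : u ≠ x3 := by rintro rfl; rw [hψ3] at hcol; exact hcc2 hcol
          exact ⟨⟨hu1, hu2, hu3⟩, hadj, by rw [← hψS u hu1 hu2 hu3]; exact hcol⟩
        · rintro ⟨⟨hu1, hu2, hu3⟩, hadj, hcol⟩
          exact ⟨hadj, by rw [hψS u hu1 hu2 hu3]; exact hcol⟩
      rw [hset]
      exact (huniq2 c2).2 rfl
    -- generic vertex
    have hvnx1 : ¬ G.Adj v x1 := by
      intro h
      rcases (hadj1 v).1 h.symm with rfl | rfl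
      · exact hvy1 rfl
      · exact hv2 rfl
    have hvnx2 : ¬ G.Adj v x2 := by
      intro h
      rcases (hadj2 v).1 h.symm with rfl | rfl
      · exact hv1 rfl
      · exact hv3 rfl
    have hvnx3 : ¬ G.Adj v x3 := by
      intro h
      rcases (hadj3 v).1 h.symm with rfl | rfl
      · exact hv2 rfl
      · exact hvy2 rfl
    obtain ⟨u, hu⟩ := hv
    have huS : u ≠ x1 ∧ u ≠ x2 ∧ u ≠ x3 :=
      ⟨fun h => hvnx1 (h ▸ hu), fun h => hvnx2 (h ▸ hu), fun h => hvnx3 (h ▸ hu)⟩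
    obtain ⟨cc, hcc⟩ := hφ.2 v ⟨hv1, hv2, hv3⟩ ⟨u, huS, hu⟩
    refine ⟨cc, ?_⟩
    have hset : {u : V | G.Adj v u ∧ ψ u = cc}
        = {u : V | (u ≠ x1 ∧ u ≠ x2 ∧ u ≠ x3) ∧ G.Adj v u ∧ φ u = cc} := by
      ext w
      simp only [Set.mem_setOf_eq]
      constructor
      · rintro ⟨hadj, hcol⟩
        have hw1 : w ≠ x1 := by rintro rfl; exact hvnx1 hadj
        have hw2 : w ≠ x2 := by rintro rfl; exact hvnx2 hadj
        have hw3 : w ≠ x3 := by rintro rfl; exact hvnx3 hadj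
        exact ⟨⟨hw1, hw2, hw3⟩, hadj, by rw [← hψS w hw1 hw2 hw3]; exact hcol⟩
      · rintro ⟨⟨hw1, hw2, hw3⟩, hadj, hcol⟩
        exact ⟨hadj, by rw [hψS w hw1 hw2 hw3]; exact hcol⟩
    rw [hset]
    exact hcc
end

section
/- Let G be a vertex-minimal graph admitting no odd 4-coloring. Then G contains no path v1v2v3v4v5 such that deg(v1) is odd and deg(v2) = deg(v4) = deg(v5) = 2. -/
/-!
Delete `v4` and join `v3v5`; by minimality the smaller graph has an odd coloring. Give `v4` a
color missing from `v3`, `v5` and the other neighbor `w` of `v5`. Then `v4` sees two distinct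
colors (`v3v5` was an edge), `v5` sees the color of `v4` exactly once, and every other vertex
except `v3` keeps its neighborhood and colors. To repair `v3`, recolor `v2` with one of two
colors avoiding `v1` and `v3`: the two choices differ in the parity of one color class at `v3`,
so one of them works. The vertex `v2` still sees two colors, since `v1` and `v3` had distinct
colors in the smaller graph where `v2` also has degree two, and `v1` is safe because every
coloring is odd at a vertex of odd degree.
-/

open Function SimpleGraph

namespace Set

variable {V : Type*} {s : Set V} {a b : V}

theorem eq_pair_of_ncard_eq_two (ha : a ∈ s) (hb : b ∈ s) (hab : a ≠ b) (h : s.ncard = 2) :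
    s = {a, b} :=
  (eq_of_subset_of_ncard_le (insert_subset ha (singleton_subset_iff.2 hb))
    (by rw [h, ncard_pair hab]) (finite_of_ncard_pos (by omega))).symm

theorem exists_eq_pair_of_mem_of_ncard_eq_two (ha : a ∈ s) (h : s.ncard = 2) :
    ∃ b, a ≠ b ∧ s = {a, b} := by
  obtain ⟨x, y, hxy, rfl⟩ := ncard_eq_two.1 h
  rcases ha with rfl | rfl
  · exact ⟨y, hxy, rfl⟩
  · exact ⟨x, hxy.symm, pair_comm _ _⟩

end Set

variable {V α : Type*} {G : SimpleGraph V} {φ ψ : V → α} {v : V}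

def IsProperColoring (G : SimpleGraph V) (φ : V → α) : Prop :=
  ∀ u v, G.Adj u v → φ u ≠ φ v

def HasOddColorAt (G : SimpleGraph V) (φ : V → α) (v : V) : Prop :=
  ∃ c, Odd {u ∈ G.neighborSet v | φ u = c}.ncard

theorem isOddColoring_of_hasOddColorAt (hφ : IsProperColoring G φ)
    (hodd : ∀ v u, G.Adj v u → HasOddColorAt G φ v) : IsOddColoring G φ :=
  ⟨hφ, fun v ⟨u, hu⟩ => hodd v u hu⟩

theorem isProperColoring_of_adj_ne
    (hoff : ∀ x y, G.Adj x y → x ≠ v → y ≠ v → φ x ≠ φ y)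
    (hv : ∀ u, G.Adj v u → φ v ≠ φ u) : IsProperColoring G φ := by
  intro x y hxy
  by_cases hx : x = v
  · exact hx ▸ hv y (hx ▸ hxy)
  by_cases hy : y = v
  · exact (hy ▸ hv x (hy ▸ hxy.symm)).symm
  exact hoff x y hxy hx hy

theorem hasOddColorAt_congr (h : ∀ u, G.Adj v u → φ u = ψ u) :
    HasOddColorAt G φ v ↔ HasOddColorAt G ψ v := by
  have hsets : ∀ c, {u ∈ G.neighborSet v | φ u = c} = {u ∈ G.neighborSet v | ψ u = c} :=
    fun c => Set.ext fun u => and_congr_right fun hu => by rw [h u hu]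
  simp only [HasOddColorAt, hsets]

theorem hasOddColorAt_of_odd_ncard (hodd : Odd (G.neighborSet v).ncard) (φ : V → α) :
    HasOddColorAt G φ v := by
  classical
  by_contra hnone
  have hfin := Set.finite_of_ncard_pos hodd.pos
  set s := hfin.toFinset
  have hfiber : ∀ c, {u ∈ G.neighborSet v | φ u = c}.ncard = (s.filter (φ · = c)).card :=
    fun c => by rw [← Set.ncard_coe_finset]; congr; ext; simp [s]
  have heven : Even s.card := by
    rw [Finset.card_eq_sum_card_image φ s]
    refine Finset.even_sum _ fun c _ => ?_
    rw [← hfiber, ← Nat.not_odd_iff_even]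
    exact fun h => hnone ⟨c, h⟩
  rw [← Set.ncard_eq_toFinset_card _ hfin] at heven
  exact Nat.not_even_iff_odd.2 hodd heven

theorem hasOddColorAt_iff_of_neighborSet_eq_pair {a b : V} (h : G.neighborSet v = {a, b})
    (hab : a ≠ b) : HasOddColorAt G φ v ↔ φ a ≠ φ b := by
  rw [HasOddColorAt, h]
  constructor
  · rintro ⟨c, hc⟩ hφ
    by_cases hac : φ a = c
    · have : {u ∈ ({a, b} : Set V) | φ u = c} = {a, b} := by
        ext u; simp only [Set.mem_sep_iff]; constructor
        · exact And.left
        · rintro (rfl | rfl) <;> simp_all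
      rw [this, Set.ncard_pair hab] at hc
      exact Nat.not_odd_iff_even.2 even_two hc
    · have : {u ∈ ({a, b} : Set V) | φ u = c} = ∅ := by
        ext u; simp only [Set.mem_sep_iff, Set.mem_empty_iff_false, iff_false]
        rintro ⟨rfl | rfl, hu⟩ <;> simp_all
      rw [this, Set.ncard_empty] at hc
      exact Nat.not_odd_zero hc
  · intro hφ
    refine ⟨φ a, ?_⟩
    have : {u ∈ ({a, b} : Set V) | φ u = φ a} = {a} := by
      ext u; simp only [Set.mem_sep_iff, Set.mem_singleton_iff]; constructor
      · rintro ⟨rfl | rfl, hu⟩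
        exacts [rfl, absurd hu.symm hφ]
      · rintro rfl; simp
    rw [this, Set.ncard_singleton]
    exact odd_one

theorem hasOddColorAt_update_or [DecidableEq V] {x : V} {a b : α}
    (hfin : (G.neighborSet v).Finite) (hx : G.Adj v x) (hab : a ≠ b) (φ : V → α) :
    HasOddColorAt G (update φ x a) v ∨ HasOddColorAt G (update φ x b) v := by
  by_contra! h
  have hnot : x ∉ {u ∈ G.neighborSet v | update φ x b u = a} := by simp [hab.symm]
  have hinsert : {u ∈ G.neighborSet v | update φ x a u = a}
      = insert x {u ∈ G.neighborSet v | update φ x b u = a} := by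
    ext u
    by_cases hu : u = x
    · subst hu; simpa using hx
    · simp [hu]
  have heven := Nat.not_odd_iff_even.1 fun hc => h.2 ⟨a, hc⟩
  refine h.1 ⟨a, ?_⟩
  rw [hinsert, Set.ncard_insert_of_notMem hnot (hfin.subset (Set.sep_subset _ _))]
  exact heven.add_one

theorem HasOddColorAt.of_subtype {s : Set V} {H : SimpleGraph s} {v : s} {φ : s → α}
    (h : HasOddColorAt H φ v) (hN : G.neighborSet v ⊆ s)
    (hadj : ∀ u : s, H.Adj v u ↔ G.Adj v u)
    (hψ : ∀ u : s, ψ u = φ u) : HasOddColorAt G ψ v := by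
  obtain ⟨c, hc⟩ := h
  refine ⟨c, ?_⟩
  have himage : {u ∈ G.neighborSet v | ψ u = c}
      = Subtype.val '' {u ∈ H.neighborSet v | φ u = c} := by
    ext u
    constructor
    · rintro ⟨hu, rfl⟩
      exact ⟨⟨u, hN hu⟩, ⟨(hadj _).2 hu, (hψ _).symm⟩, rfl⟩
    · rintro ⟨u, ⟨hu, rfl⟩, rfl⟩
      exact ⟨(hadj u).1 hu, hψ u⟩
  rwa [himage, Set.ncard_image_of_injective _ Subtype.val_injective]

theorem exists_ne_ne_ne [Fintype α] (hα : 4 ≤ Fintype.card α) (x y z : α) :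
    ∃ c, c ≠ x ∧ c ≠ y ∧ c ≠ z := by
  classical
  obtain ⟨c, -, hc⟩ := Finset.exists_mem_notMem_of_card_lt_card (s := {x, y, z}) (t := .univ)
    (by rw [Finset.card_univ]; exact Finset.card_le_three.trans_lt (by omega))
  simp only [Finset.mem_insert, Finset.mem_singleton, not_or] at hc
  exact ⟨c, hc⟩

def IsOddColoringExcept (G : SimpleGraph V) (φ : V → α) (x : V) : Prop :=
  IsProperColoring G φ ∧ ∀ v u, v ≠ x → G.Adj v u → HasOddColorAt G φ v

theorem exists_isOddColoringExcept_of_isOddColoring_induce [Fintype α]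
    (hα : 4 ≤ Fintype.card α) {v3 v4 v5 w : V} (h4 : G.neighborSet v4 = {v3, v5})
    (h35 : v3 ≠ v5) (h5 : G.neighborSet v5 = {v4, w}) (h4w : v4 ≠ w)
    {φ : ({v4}ᶜ : Set V) → α} (hφ : IsOddColoring ((G ⊔ edge v3 v5).induce {v4}ᶜ) φ) :
    ∃ f : V → α, IsOddColoringExcept G f v3 := by
  have hv4 : ∀ {u}, G.Adj v4 u → u = v3 ∨ u = v5 := fun hu => by
    rwa [← mem_neighborSet, h4] at hu
  have h3 : v3 ≠ v4 := (G.ne_of_adj (by simp [← mem_neighborSet, h4] : G.Adj v4 v3)).symm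
  have h5' : v5 ≠ v4 := (G.ne_of_adj (by simp [← mem_neighborSet, h4] : G.Adj v4 v5)).symm
  obtain ⟨c4, hc3, hc5, hcw⟩ :=
    exists_ne_ne_ne hα (φ ⟨v3, h3⟩) (φ ⟨v5, h5'⟩) (φ ⟨w, h4w.symm⟩)
  set f : V → α := extend Subtype.val φ fun _ => c4
  have hf : ∀ u : ({v4}ᶜ : Set V), f u = φ u := Subtype.val_injective.extend_apply _ _
  have hf4 : f v4 = c4 := extend_apply' _ _ _ fun ⟨u, hu⟩ => u.2 hu
  refine ⟨f, isProperColoring_of_adj_ne (v := v4) ?_ ?_, fun v u hv3 hvu => ?_⟩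
  · intro x y hxy hx hy
    rw [hf ⟨x, hx⟩, hf ⟨y, hy⟩]
    exact hφ.1 _ _ (Or.inl hxy)
  · intro u hu
    rcases hv4 hu with rfl | rfl
    exacts [hf4 ▸ hf ⟨u, h3⟩ ▸ hc3, hf4 ▸ hf ⟨u, h5'⟩ ▸ hc5]
  by_cases hv : v = v4
  · subst hv
    rw [hasOddColorAt_iff_of_neighborSet_eq_pair h4 h35, hf ⟨v3, h3⟩, hf ⟨v5, h5'⟩]
    exact hφ.1 _ _ (Or.inr (by simp [edge_adj, h35]))
  by_cases hv5 : v = v5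
  · subst hv5
    rw [hasOddColorAt_iff_of_neighborSet_eq_pair h5 h4w, hf4, hf ⟨w, h4w.symm⟩]
    exact hcw
  have hN : G.neighborSet v ⊆ {v4}ᶜ := by
    rintro u hu rfl
    rcases hv4 hu.symm with rfl | rfl <;> contradiction
  have hH : HasOddColorAt ((G ⊔ edge v3 v5).induce {v4}ᶜ) φ ⟨v, hv⟩ :=
    hφ.2 _ ⟨⟨u, hN hvu⟩, Or.inl hvu⟩
  refine hH.of_subtype hN (fun u => ?_) hf
  simp [edge_adj, hv3, hv5]

theorem IsOddColoringExcept.exists_isOddColoring [Finite V] [DecidableEq V] [Fintype α]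
    (hα : 4 ≤ Fintype.card α) {v1 v2 v3 : V} {f : V → α} (hf : IsOddColoringExcept G f v3)
    (h2 : G.neighborSet v2 = {v1, v3}) (h13 : v1 ≠ v3) (hodd : Odd (G.neighborSet v1).ncard) :
    ∃ ψ : V → α, IsOddColoring G ψ := by
  have hv2 : ∀ {u}, G.Adj v2 u → u = v1 ∨ u = v3 := fun hu => by
    rwa [← mem_neighborSet, h2] at hu
  have h21 : G.Adj v2 v1 := by simp [← mem_neighborSet, h2]
  have h23 : G.Adj v2 v3 := by simp [← mem_neighborSet, h2]
  have hf13 : f v1 ≠ f v3 :=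
    (hasOddColorAt_iff_of_neighborSet_eq_pair h2 h13).1 (hf.2 v2 v1 (G.ne_of_adj h23) h21)
  obtain ⟨ca, hca1, hca3, -⟩ := exists_ne_ne_ne hα (f v1) (f v3) (f v3)
  obtain ⟨cb, hcb1, hcb3, hcba⟩ := exists_ne_ne_ne hα (f v1) (f v3) ca
  obtain ⟨c2, hc21, hc23, hodd3⟩ :
      ∃ c2, c2 ≠ f v1 ∧ c2 ≠ f v3 ∧ HasOddColorAt G (update f v2 c2) v3 := by
    rcases hasOddColorAt_update_or (Set.toFinite _) h23.symm hcba.symm f with h | h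
    exacts [⟨ca, hca1, hca3, h⟩, ⟨cb, hcb1, hcb3, h⟩]
  have hupd : ∀ {v}, v ≠ v2 → update f v2 c2 v = f v := fun hv => update_of_ne hv _ _
  refine ⟨update f v2 c2, isOddColoring_of_hasOddColorAt
    (isProperColoring_of_adj_ne (v := v2) ?_ ?_) fun v u hvu => ?_⟩
  · intro x y hxy hx hy
    rw [hupd hx, hupd hy]
    exact hf.1 x y hxy
  · intro u hu
    rw [update_self, hupd (G.ne_of_adj hu).symm]
    rcases hv2 hu with rfl | rfl
    exacts [hc21, hc23]
  by_cases hv1 : v = v1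
  · exact hv1 ▸ hasOddColorAt_of_odd_ncard hodd _
  by_cases hv : v = v2
  · subst hv
    rw [hasOddColorAt_iff_of_neighborSet_eq_pair h2 h13, hupd (G.ne_of_adj h21).symm,
      hupd (G.ne_of_adj h23).symm]
    exact hf13
  by_cases hv3 : v = v3
  · exact hv3 ▸ hodd3
  rw [hasOddColorAt_congr (ψ := f) fun u hu => hupd ?_]
  · exact hf.2 v u hv3 hvu
  rintro rfl
  rcases hv2 hu.symm with rfl | rfl <;> contradiction

theorem minimal_no_odd4_no_special_path_general
    {V : Type} [Fintype V] (G : SimpleGraph V)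
    (hno : ¬ ∃ φ : V → Fin 4, IsOddColoring G φ)
    (hmin : ∀ (W : Type) [Fintype W] (H : SimpleGraph W),
      Fintype.card W < Fintype.card V → ∃ φ : W → Fin 4, IsOddColoring H φ) :
    ¬ ∃ v1 v2 v3 v4 v5 : V,
      ([v1, v2, v3, v4, v5] : List V).Nodup ∧
      G.Adj v1 v2 ∧ G.Adj v2 v3 ∧ G.Adj v3 v4 ∧ G.Adj v4 v5 ∧
      Odd (G.neighborSet v1).ncard ∧
      (G.neighborSet v2).ncard = 2 ∧
      (G.neighborSet v4).ncard = 2 ∧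
      (G.neighborSet v5).ncard = 2 := by
  classical
  rintro ⟨v1, v2, v3, v4, v5, hnd, h12, h23, h34, h45, hodd, hd2, hd4, hd5⟩
  simp only [List.nodup_cons, List.mem_cons, List.not_mem_nil] at hnd
  have h13 : v1 ≠ v3 := by tauto
  have h35 : v3 ≠ v5 := by tauto
  obtain ⟨w, h4w, h5⟩ := Set.exists_eq_pair_of_mem_of_ncard_eq_two h45.symm hd5
  obtain ⟨φ, hφ⟩ := hmin ({v4}ᶜ : Set V) ((G ⊔ edge v3 v5).induce {v4}ᶜ)
    (Fintype.card_subtype_lt (x := v4) (by simp))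
  obtain ⟨f, hf⟩ := exists_isOddColoringExcept_of_isOddColoring_induce (by simp)
    (Set.eq_pair_of_ncard_eq_two h34.symm h45 h35 hd4) h35 h5 h4w hφ
  exact hno (hf.exists_isOddColoring (by simp) (Set.eq_pair_of_ncard_eq_two h12.symm h23 h13 hd2)
    h13 hodd)

/-- A vertex-minimal graph admitting no odd 4-coloring, in which no
odd-degree vertex anchors a thread of two or more consecutive degree-2 vertices,
contains no path `v1v2v3v4v5` with `deg(v1)` odd and `deg(v2) = deg(v4) = deg(v5) = 2`. -/
theorem minimal_no_odd4_no_special_path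
    {V : Type} [Fintype V] (G : SimpleGraph V)
    (hno : ¬ ∃ φ : V → Fin 4, IsOddColoring G φ)
    (hmin : ∀ (W : Type) [Fintype W] (H : SimpleGraph W),
      Fintype.card W < Fintype.card V → ∃ φ : W → Fin 4, IsOddColoring H φ)
    (hanchor : ¬ ∃ u x y : V, Odd (G.neighborSet u).ncard ∧
      3 ≤ (G.neighborSet u).ncard ∧ G.Adj u x ∧ G.Adj x y ∧ u ≠ y ∧
      (G.neighborSet x).ncard = 2 ∧ (G.neighborSet y).ncard = 2) :
    ¬ ∃ v1 v2 v3 v4 v5 : V,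
      ([v1, v2, v3, v4, v5] : List V).Nodup ∧
      G.Adj v1 v2 ∧ G.Adj v2 v3 ∧ G.Adj v3 v4 ∧ G.Adj v4 v5 ∧
      Odd (G.neighborSet v1).ncard ∧
      (G.neighborSet v2).ncard = 2 ∧
      (G.neighborSet v4).ncard = 2 ∧
      (G.neighborSet v5).ncard = 2 :=
  minimal_no_odd4_no_special_path_general G hno hmin
end

section
/- Let G be a vertex-minimal graph admitting no odd 4-coloring. Then every 3-vertex of G has a neighbor of even degree at least 4. -/
open Set Function

variable {V α : Type*}

theorem Set.Finite.exists_odd_ncard_fiber {s : Set V} (hs : s.Finite) (hodd : Odd s.ncard)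
    (f : V → α) : ∃ c, Odd {u | u ∈ s ∧ f u = c}.ncard := by
  classical
  lift s to Finset V using hs
  by_contra! h
  rw [ncard_coe_finset, Finset.card_eq_sum_card_image f s, ← Nat.not_even_iff_odd] at hodd
  refine hodd (Finset.even_sum _ fun c _ => ?_)
  simpa [← Finset.coe_filter, Nat.not_odd_iff_even] using h c

theorem exists_notMem_of_ncard_lt {s : Set α} (h : s.ncard < Nat.card α) : ∃ a, a ∉ s := by
  by_contra! hs
  rw [eq_univ_of_forall hs, ncard_univ] at h
  exact h.false

theorem exists_ne_ne_of_four_le_card (hα : 4 ≤ Nat.card α) (a b : α) :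
    ∃ p q : α, p ≠ q ∧ (p ≠ a ∧ p ≠ b) ∧ (q ≠ a ∧ q ≠ b) := by
  have h2 : ({a, b} : Set α).ncard ≤ 2 := (ncard_insert_le a {b}).trans (by rw [ncard_singleton])
  have h3 (p : α) : ({p, a, b} : Set α).ncard ≤ 3 := (ncard_insert_le p _).trans (by omega)
  obtain ⟨p, hp⟩ := exists_notMem_of_ncard_lt (by omega : ({a, b} : Set α).ncard < _)
  obtain ⟨q, hq⟩ :=
    exists_notMem_of_ncard_lt (by have := h3 p; omega : ({p, a, b} : Set α).ncard < _)
  simp only [mem_insert_iff, mem_singleton_iff, not_or] at hp hq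
  exact ⟨p, q, Ne.symm hq.1, hp, hq.2⟩

theorem exists_extension_odd_fiber {N S : Set V} (f : V → α) {p q : α} (hpq : p ≠ q)
    (hf : (N \ S).Nonempty → ∃ c, Odd {u | u ∈ N \ S ∧ f u = c}.ncard) (hN : N.Nonempty) :
    ∃ g : V → α, (∀ w, g w = p ∨ g w = q) ∧
      ∀ h : V → α, EqOn h f (N \ S) → EqOn h g (N ∩ S) →
        ∃ c, Odd {u | u ∈ N ∧ h u = c}.ncard := by
  classical
  rcases (N \ S).eq_empty_or_nonempty with hNS | hNS
  · obtain ⟨m, hm⟩ := hN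
    have hNS : N ⊆ S := sdiff_eq_empty.1 hNS
    refine ⟨fun w => if w = m then p else q, fun w => by by_cases w = m <;> simp [*],
      fun h _ hhg => ⟨p, ?_⟩⟩
    have : {u | u ∈ N ∧ h u = p} = {m} := by
      ext u
      simp only [mem_ofPred_eq, mem_singleton_iff]
      refine ⟨fun ⟨hu, hp⟩ => ?_, fun hu => hu ▸ ⟨hm, by simp [hhg ⟨hm, hNS hm⟩]⟩⟩
      by_contra hum
      simp [hhg ⟨hu, hNS hu⟩, hum, hpq.symm] at hp
    rw [this, ncard_singleton]
    exact odd_one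
  · obtain ⟨c, hc⟩ := hf hNS
    obtain ⟨r, hr, hrc⟩ : ∃ r, (r = p ∨ r = q) ∧ r ≠ c := by
      by_cases hpc : p = c
      · exact ⟨q, .inr rfl, hpc ▸ hpq.symm⟩
      · exact ⟨p, .inl rfl, hpc⟩
    refine ⟨fun _ => r, fun _ => hr, fun h hhf hhg => ⟨c, ?_⟩⟩
    convert hc using 2
    ext u
    simp only [mem_ofPred_eq, mem_sdiff]
    constructor
    · rintro ⟨hu, rfl⟩
      by_cases huS : u ∈ S
      · exact absurd (hhg ⟨hu, huS⟩).symm hrc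
      · exact ⟨⟨hu, huS⟩, (hhf ⟨hu, huS⟩).symm⟩
    · rintro ⟨hu, rfl⟩
      exact ⟨hu.1, hhf hu⟩

def IsOddColoringOn (G : SimpleGraph V) (s : Set V) (φ : V → α) : Prop :=
  (∀ a ∈ s, ∀ b ∈ s, G.Adj a b → φ a ≠ φ b) ∧
  ∀ y ∈ s, (∃ u ∈ s, G.Adj y u) →
    ∃ c, Odd {u | (G.Adj y u ∧ u ∈ s) ∧ φ u = c}.ncard

namespace SimpleGraph

variable (G : SimpleGraph V)

theorem exists_isOddColoringOn_of_induce [Inhabited α] {s : Set V} {φ : s → α}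
    (hφ : IsOddColoring (G.induce s) φ) : ∃ ψ : V → α, IsOddColoringOn G s ψ := by
  classical
  refine ⟨fun y => if h : y ∈ s then φ ⟨y, h⟩ else default,
    fun a ha b hb hab => ?_, fun y hy ⟨u, hu, hyu⟩ => ?_⟩
  · simpa [ha, hb] using hφ.1 ⟨a, ha⟩ ⟨b, hb⟩ hab
  · obtain ⟨c, hc⟩ := hφ.2 ⟨y, hy⟩ ⟨⟨u, hu⟩, hyu⟩
    refine ⟨c, ?_⟩
    rw [← ncard_image_of_injective _ Subtype.val_injective] at hc
    convert hc using 2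
    ext z
    by_cases hz : z ∈ s <;> simp [hz]

theorem exists_odd_ncard_of_neighborSet_eq_pair {φ : V → α} {y a b : V}
    (h : G.neighborSet y = {a, b}) (hab : φ a ≠ φ b) :
    ∃ c, Odd {u | G.Adj y u ∧ φ u = c}.ncard := by
  refine ⟨φ a, ?_⟩
  have : {u | G.Adj y u ∧ φ u = φ a} = {a} := by
    ext u
    change u ∈ G.neighborSet y ∧ _ ↔ _
    rw [h]
    simp only [mem_insert_iff, mem_singleton_iff]
    constructor
    · rintro ⟨rfl | rfl, hu⟩
      · rfl
      · exact absurd hu.symm hab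
    · rintro rfl
      exact ⟨.inl rfl, rfl⟩
  rw [this, ncard_singleton]
  exact odd_one

theorem exists_neighborSet_eq_pair {v w : V} (h : G.Adj w v)
    (h2 : (G.neighborSet w).ncard = 2) : ∃ x, x ≠ v ∧ G.neighborSet w = {v, x} := by
  obtain ⟨x, hx⟩ : ∃ x, G.neighborSet w \ {v} = {x} := ncard_eq_one.1
    (by rw [ncard_sdiff_singleton_of_mem (s := G.neighborSet w) h, h2])
  have hxw : x ∈ G.neighborSet w \ {v} := hx ▸ rfl
  refine ⟨x, hxw.2, ?_⟩
  rw [← singleton_union, ← hx, union_sdiff_self]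
  exact (union_eq_right.2 (singleton_subset_iff.2 h)).symm

/-- The paper deletes all degree-2 neighbours of `v`; those on a triangle through `v` are kept
here, so that no two deleted vertices are adjacent. -/
def hangingNbrs (v : V) : Set V :=
  {w | G.Adj v w ∧ (G.neighborSet w).ncard = 2 ∧ Disjoint (G.neighborSet w) (G.neighborSet v)}

theorem exists_other_nbr_of_mem_hangingNbrs {v w : V} (hw : w ∈ G.hangingNbrs v) :
    ∃ x, G.neighborSet w = {v, x} ∧ x ∉ insert v (G.hangingNbrs v) := by
  obtain ⟨hvw, h2, hdisj⟩ := hw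
  obtain ⟨x, hxv, hx⟩ := G.exists_neighborSet_eq_pair hvw.symm h2
  have hwx : x ∈ G.neighborSet w := by rw [hx]; exact .inr rfl
  have hvx : ¬ G.Adj v x := Set.disjoint_left.1 hdisj hwx
  refine ⟨x, hx, ?_⟩
  simp only [mem_insert_iff, not_or]
  exact ⟨hxv, fun hx' => hvx hx'.1⟩

theorem exists_neighborSet_eq_pair_of_notMem_hangingNbrs {v y : V} (hvy : G.Adj v y)
    (h2 : (G.neighborSet y).ncard = 2) (hy : y ∉ G.hangingNbrs v) :
    ∃ z, G.neighborSet y = {v, z} ∧ G.Adj v z := by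
  obtain ⟨z, -, hz⟩ := G.exists_neighborSet_eq_pair hvy.symm h2
  refine ⟨z, hz, ?_⟩
  have hndisj : ¬ Disjoint (G.neighborSet y) (G.neighborSet v) := fun hd => hy ⟨hvy, h2, hd⟩
  rw [hz, Set.disjoint_insert_left, Set.disjoint_singleton_left] at hndisj
  by_contra hvz
  exact hndisj ⟨G.irrefl, hvz⟩

theorem exists_coloring_hangingNbrs (hα : 4 ≤ Nat.card α) {v : V} {x : V → V}
    (hx : ∀ w ∈ G.hangingNbrs v, G.neighborSet w = {v, x w}) {φ₀ : V → α}
    (hφ₀ : IsOddColoringOn G (insert v (G.hangingNbrs v))ᶜ φ₀) (cv : α) :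
    ∃ ψ : V → α, (∀ w, ψ w ≠ cv ∧ ψ w ≠ φ₀ (x w)) ∧
      ∀ h : V → α, EqOn h φ₀ (insert v (G.hangingNbrs v))ᶜ →
        EqOn h ψ (G.hangingNbrs v) →
        ∀ y ∉ insert v (G.hangingNbrs v), ¬ G.Adj v y → (∃ u, G.Adj y u) →
          ∃ c, Odd {u | G.Adj y u ∧ h u = c}.ncard := by
  classical
  set D := G.hangingNbrs v
  set S := insert v D
  have hg : ∀ y, ∃ g : V → α, (∀ w, g w ≠ cv ∧ g w ≠ φ₀ y) ∧
      (y ∉ S → ¬ G.Adj v y → (∃ u, G.Adj y u) → ∀ h : V → α,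
        EqOn h φ₀ (G.neighborSet y \ S) → EqOn h g (G.neighborSet y ∩ S) →
          ∃ c, Odd {u | G.Adj y u ∧ h u = c}.ncard) := by
    intro y
    obtain ⟨p, q, hpq, hp, hq⟩ := exists_ne_ne_of_four_le_card hα cv (φ₀ y)
    by_cases hy : y ∉ S ∧ ¬ G.Adj v y ∧ ∃ u, G.Adj y u
    · obtain ⟨hyS, -, hne⟩ := hy
      obtain ⟨g, hgpq, hodd⟩ := exists_extension_odd_fiber φ₀ hpq
        (fun ⟨u, hyu, hu⟩ => hφ₀.2 y hyS ⟨u, hu, hyu⟩) hne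
      refine ⟨g, fun w => ?_, fun _ _ _ => hodd⟩
      rcases hgpq w with h | h <;> rw [h]
      exacts [hp, hq]
    · exact ⟨fun _ => p, fun _ => hp, fun h1 h2 h3 => absurd ⟨h1, h2, h3⟩ hy⟩
  choose g hgc hgodd using hg
  refine ⟨fun w => g (x w) w, fun w => hgc _ _, fun h hS hD y hy hvy hne =>
    hgodd y hy hvy hne h (fun u hu => hS hu.2) fun w ⟨hyw, hwS⟩ => ?_⟩
  have hwD : w ∈ D := hwS.resolve_left (by rintro rfl; exact hvy hyw.symm)
  have hyx : y = x w := by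
    have : y ∈ G.neighborSet w := hyw.symm
    rw [hx w hwD] at this
    exact this.resolve_left (by rintro rfl; exact hy (mem_insert _ _))
  rw [hD hwD, hyx]

theorem isOddColoring_of_hangingNbrs [Finite V] {v : V} (hv : Odd (G.neighborSet v).ncard)
    (hnb : ∀ u, G.Adj v u → (G.neighborSet u).ncard = 2 ∨ Odd (G.neighborSet u).ncard)
    {x : V → V} (hx : ∀ w ∈ G.hangingNbrs v, G.neighborSet w = {v, x w}) {φ : V → α}
    (hSc : ∀ a ∉ insert v (G.hangingNbrs v), ∀ b ∉ insert v (G.hangingNbrs v),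
      G.Adj a b → φ a ≠ φ b)
    (hφv : ∀ u, G.Adj v u → φ v ≠ φ u)
    (hφD : ∀ w ∈ G.hangingNbrs v, φ w ≠ φ (x w) ∧ φ v ≠ φ (x w))
    (hodd : ∀ y ∉ insert v (G.hangingNbrs v), ¬ G.Adj v y → (∃ u, G.Adj y u) →
      ∃ c, Odd {u | G.Adj y u ∧ φ u = c}.ncard) :
    IsOddColoring G φ := by
  set D := G.hangingNbrs v
  have hnbD : ∀ w ∈ D, ∀ u, G.Adj w u → u ≠ v → u = x w := fun w hw u hwu huv => by
    have : u ∈ G.neighborSet w := hwu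
    rw [hx w hw] at this
    exact this.resolve_left huv
  have hedge : ∀ a b, G.Adj a b → a ∈ insert v D → φ a ≠ φ b := by
    rintro a b hab (rfl | ha)
    · exact hφv b hab
    · by_cases hbv : b = v
      · exact hbv ▸ (hφv a (hbv ▸ hab.symm)).symm
      · exact hnbD a ha b hab hbv ▸ (hφD a ha).1
  refine ⟨fun a b hab => ?_, fun y hne => ?_⟩
  · by_cases ha : a ∈ insert v D
    · exact hedge a b hab ha
    by_cases hb : b ∈ insert v D
    · exact (hedge b a hab.symm hb).symm
    exact hSc a ha b hb hab
  rcases eq_or_ne y v with rfl | hyv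
  · exact (G.neighborSet y).toFinite.exists_odd_ncard_fiber hv φ
  by_cases hyD : y ∈ D
  · exact G.exists_odd_ncard_of_neighborSet_eq_pair (hx y hyD) (hφD y hyD).2
  have hyS : y ∉ insert v D := by simp [hyv, hyD]
  by_cases hvy : G.Adj v y
  · rcases hnb y hvy with h2 | hodd
    · obtain ⟨z, hz, hvz⟩ := G.exists_neighborSet_eq_pair_of_notMem_hangingNbrs hvy h2 hyD
      exact G.exists_odd_ncard_of_neighborSet_eq_pair hz (hφv z hvz)
    · exact (G.neighborSet y).toFinite.exists_odd_ncard_fiber hodd φ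
  · exact hodd y hyS hvy hne

theorem exists_isOddColoring_of_isOddColoringOn [Finite V] (hα : 4 ≤ Nat.card α) {v : V}
    (hv : Odd (G.neighborSet v).ncard) (hv3 : (G.neighborSet v).ncard ≤ 3)
    (hnb : ∀ u, G.Adj v u → (G.neighborSet u).ncard = 2 ∨ Odd (G.neighborSet u).ncard)
    {φ₀ : V → α} (hφ₀ : IsOddColoringOn G (insert v (G.hangingNbrs v))ᶜ φ₀) :
    ∃ φ : V → α, IsOddColoring G φ := by
  classical
  set D := G.hangingNbrs v
  set S := insert v D
  choose! x hxN hxS using fun w (hw : w ∈ D) => G.exists_other_nbr_of_mem_hangingNbrs hw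
  set τ : V → α := fun u => φ₀ (if u ∈ D then x u else u)
  obtain ⟨cv, hcv⟩ : ∃ cv, cv ∉ τ '' G.neighborSet v :=
    exists_notMem_of_ncard_lt ((ncard_image_le (toFinite _)).trans_lt (by omega))
  obtain ⟨ψ, hψ, hψodd⟩ := G.exists_coloring_hangingNbrs hα hxN hφ₀ cv
  set φ := update (D.piecewise ψ φ₀) v cv with hφ
  have hφv : φ v = cv := update_self ..
  have hφD : ∀ w ∈ D, φ w = ψ w := fun w hw => by
    rw [hφ, update_of_ne (by rintro rfl; exact G.irrefl hw.1), piecewise_eq_of_mem _ _ _ hw]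
  have hφS : ∀ y ∉ S, φ y = φ₀ y := fun y hy => by
    simp only [S, mem_insert_iff, not_or] at hy
    rw [hφ, update_of_ne hy.1, piecewise_eq_of_notMem _ _ _ hy.2]
  refine ⟨φ, G.isOddColoring_of_hangingNbrs hv hnb hxN
    (fun a ha b hb hab => by rw [hφS a ha, hφS b hb]; exact hφ₀.1 a ha b hb hab)
    (fun u hvu => ?_) (fun w hw => ?_) (hψodd φ hφS hφD)⟩
  · rw [hφv]
    by_cases huD : u ∈ D
    · rw [hφD u huD]
      exact (hψ u).1.symm
    · have huS : u ∉ S := by simp [S, huD, (G.ne_of_adj hvu).symm]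
      rw [hφS u huS]
      exact fun h => hcv ⟨u, hvu, by simp [τ, huD, h]⟩
  · rw [hφD w hw, hφS _ (hxS w hw), hφv]
    have hτw : τ w = φ₀ (x w) := by simp only [τ, if_pos (show w ∈ D from hw)]
    exact ⟨(hψ w).2, fun h => hcv ⟨w, hw.1, hτw.trans h.symm⟩⟩

end SimpleGraph

/-- In a vertex-minimal graph admitting no odd 4-coloring, every vertex
of degree 3 has a neighbor of even degree at least 4. -/
theorem minimal_no_odd4_three_vertex_has_even_big_neighbor
    {V : Type} [Fintype V] (G : SimpleGraph V)
    (hno : ¬ ∃ φ : V → Fin 4, IsOddColoring G φ)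
    (hmin : ∀ (W : Type) [Fintype W] (H : SimpleGraph W),
      Fintype.card W < Fintype.card V → ∃ φ : W → Fin 4, IsOddColoring H φ) :
    ∀ v : V, (G.neighborSet v).ncard = 3 →
      ∃ u : V, G.Adj v u ∧ Even (G.neighborSet u).ncard ∧
        4 ≤ (G.neighborSet u).ncard := by
  classical
  intro v hv3
  by_contra! hcon
  have hnb : ∀ u, G.Adj v u → (G.neighborSet u).ncard = 2 ∨ Odd (G.neighborSet u).ncard := by
    intro u hvu
    refine (Nat.even_or_odd _).imp (fun he => ?_) id
    have hpos : 0 < (G.neighborSet u).ncard := (ncard_pos (toFinite _)).2 ⟨v, hvu.symm⟩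
    have := hcon u hvu he
    obtain ⟨k, hk⟩ := he
    omega
  set S := insert v (G.hangingNbrs v)
  obtain ⟨φ', hφ'⟩ :=
    hmin ↥Sᶜ (G.induce Sᶜ) (Fintype.card_subtype_lt (x := v) (by simp [S]))
  obtain ⟨φ₀, hφ₀⟩ := G.exists_isOddColoringOn_of_induce hφ'
  exact hno <|
    G.exists_isOddColoring_of_isOddColoringOn (by simp) (hv3 ▸ by decide) hv3.le hnb hφ₀
end

section
/- Every graph with maximum degree at most 2 in which every component has at least 2 vertices satisfies χ_pcf(G) ≤ 5; in particular, every cycle Cn satisfies χ_pcf(Cn) ≤ 5, and χ_pcf(C5) = 5. -/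
/-- A proper conflict-free (PCF) coloring: a proper coloring such that every
non-isolated vertex has some color appearing exactly once in its neighborhood. -/
def IsPCFColoring {V α : Type*} (G : SimpleGraph V) (φ : V → α) : Prop :=
  (∀ u v : V, G.Adj u v → φ u ≠ φ v) ∧
  ∀ v : V, (∃ u, G.Adj v u) → ∃ c : α, {u : V | G.Adj v u ∧ φ u = c}.ncard = 1

/-- The PCF chromatic number: the minimum number of colors in a PCF coloring. -/
noncomputable def pcfChromaticNumber {V : Type*} (G : SimpleGraph V) : ℕ :=
  sInf {k : ℕ | ∃ φ : V → Fin k, IsPCFColoring G φ}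


/-!
Every proper colouring of the square of `G` is a PCF colouring, since a vertex then sees
pairwise distinct colours on its neighbours. If `Δ(G) ≤ 2`, the square has maximum degree at
most `Δ² = 4`, so a greedy colouring of it uses 5 colours. Conversely, when `Δ(G) ≤ 2` the PCF
condition at a vertex with two neighbours forces them to receive different colours, so every
PCF colouring properly colours the square. The square of `C₅` is `K₅`, hence `χ_pcf(C₅) = 5`.
-/

namespace SimpleGraph

variable {V : Type*} (G : SimpleGraph V)

def square : SimpleGraph V where
  Adj u v := u ≠ v ∧ (G.Adj u v ∨ ∃ w, G.Adj w u ∧ G.Adj w v)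
  symm := ⟨fun _ _ ⟨hne, h⟩ =>
    ⟨hne.symm, h.imp (fun h => h.symm) fun ⟨w, hu, hv⟩ => ⟨w, hv, hu⟩⟩⟩
  loopless := ⟨fun _ h => h.1 rfl⟩

@[simp]
theorem square_adj {u v : V} :
    G.square.Adj u v ↔ u ≠ v ∧ (G.Adj u v ∨ ∃ w, G.Adj w u ∧ G.Adj w v) :=
  Iff.rfl

instance [Fintype V] [DecidableEq V] [DecidableRel G.Adj] : DecidableRel G.square.Adj :=
  fun _ _ => decidable_of_iff' _ G.square_adj

theorem le_square : G ≤ G.square := fun _ _ h => ⟨h.ne, Or.inl h⟩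

theorem ncard_neighborSet_eq_degree (v : V) [Fintype (G.neighborSet v)] :
    (G.neighborSet v).ncard = G.degree v := by
  rw [Set.ncard_eq_toFinset_card', ← neighborFinset_def, card_neighborFinset_eq_degree]

theorem maxDegree_square_le [Fintype V] [DecidableEq V] [DecidableRel G.Adj] :
    G.square.maxDegree ≤ G.maxDegree ^ 2 := by
  refine maxDegree_le_of_forall_degree_le _ _ fun v => ?_
  have hsub : G.square.neighborFinset v ⊆
      (G.neighborFinset v).biUnion fun w => insert w ((G.neighborFinset w).erase v) := by
    intro u hu
    obtain ⟨hne, hadj | ⟨w, hwv, hwu⟩⟩ := (G.square.mem_neighborFinset v u).mp hu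
    · exact Finset.mem_biUnion.mpr
        ⟨u, (G.mem_neighborFinset v u).mpr hadj, Finset.mem_insert_self _ _⟩
    · refine Finset.mem_biUnion.mpr ⟨w, (G.mem_neighborFinset v w).mpr hwv.symm, ?_⟩
      exact Finset.mem_insert_of_mem
        (Finset.mem_erase.mpr ⟨hne.symm, (G.mem_neighborFinset w u).mpr hwu⟩)
  have hcard (w : V) (hw : w ∈ G.neighborFinset v) :
      (insert w ((G.neighborFinset w).erase v)).card ≤ G.maxDegree := by
    have hv : v ∈ G.neighborFinset w :=
      (G.mem_neighborFinset w v).mpr ((G.mem_neighborFinset v w).mp hw).symm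
    calc _ ≤ ((G.neighborFinset w).erase v).card + 1 := Finset.card_insert_le _ _
      _ = G.degree w := Finset.card_erase_add_one hv
      _ ≤ G.maxDegree := G.degree_le_maxDegree w
  calc G.square.degree v = (G.square.neighborFinset v).card :=
        (card_neighborFinset_eq_degree _ _).symm
    _ ≤ _ := Finset.card_le_card hsub
    _ ≤ ∑ w ∈ G.neighborFinset v, (insert w ((G.neighborFinset w).erase v)).card :=
        Finset.card_biUnion_le
    _ ≤ G.degree v * G.maxDegree := by
        simpa [card_neighborFinset_eq_degree] using Finset.sum_le_card_nsmul _ _ _ hcard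
    _ ≤ G.maxDegree ^ 2 := by
        rw [sq]; exact Nat.mul_le_mul_right _ (G.degree_le_maxDegree v)

theorem colorable_maxDegree_add_one [Fintype V] [DecidableRel G.Adj] :
    G.Colorable (G.maxDegree + 1) := by
  classical
  suffices ∀ s : Finset V, ∃ φ : V → Fin (G.maxDegree + 1),
      ∀ u ∈ s, ∀ v ∈ s, G.Adj u v → φ u ≠ φ v by
    obtain ⟨φ, hφ⟩ := this Finset.univ
    exact ⟨Coloring.mk φ fun {u v} h => hφ u (Finset.mem_univ u) v (Finset.mem_univ v) h⟩
  intro s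
  induction s using Finset.induction_on with
  | empty => exact ⟨0, by simp⟩
  | insert a s ha ih =>
    obtain ⟨φ, hφ⟩ := ih
    obtain ⟨c, -, hc⟩ : ∃ c ∈ Finset.univ, c ∉ (G.neighborFinset a).image φ := by
      refine Finset.exists_mem_notMem_of_card_lt_card ?_
      calc ((G.neighborFinset a).image φ).card ≤ G.degree a := Finset.card_image_le
        _ < G.maxDegree + 1 := Nat.lt_succ_of_le (G.degree_le_maxDegree a)
        _ = Finset.univ.card := by simp
    have hca {u : V} (hu : G.Adj a u) : c ≠ φ u := fun h =>
      hc (Finset.mem_image.mpr ⟨u, (G.mem_neighborFinset a u).mpr hu, h.symm⟩)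
    have hψs {u : V} (hu : u ∈ s) : Function.update φ a c u = φ u :=
      Function.update_of_ne (by rintro rfl; exact ha hu) _ _
    refine ⟨Function.update φ a c, fun u hu v hv huv => ?_⟩
    rcases Finset.mem_insert.mp hu with rfl | hus <;>
      rcases Finset.mem_insert.mp hv with rfl | hvs
    · exact absurd huv G.irrefl
    · rw [Function.update_self, hψs hvs]; exact hca huv
    · rw [Function.update_self, hψs hus]; exact (hca huv.symm).symm
    · rw [hψs hus, hψs hvs]; exact hφ u hus v hvs huv

theorem maxDegree_cycleGraph_le_two (n : ℕ) : (cycleGraph n).maxDegree ≤ 2 := by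
  refine maxDegree_le_of_forall_degree_le _ _ fun v => ?_
  match n, v with
  | 0, v | 1, v => exact ((cycleGraph _).degree_lt_card_verts v).le.trans (by simp)
  | _ + 2, _ => exact cycleGraph_degree_two_le.trans_le Finset.card_le_two

theorem square_cycleGraph_five : (cycleGraph 5).square = ⊤ := by
  ext u v
  simp only [square_adj, top_adj]
  revert u v
  decide

end SimpleGraph

section PCF

open SimpleGraph

variable {V α : Type*} {G : SimpleGraph V}

theorem isPCFColoring_of_coloring_square (C : G.square.Coloring α) : IsPCFColoring G C := by
  refine ⟨fun u v h => C.valid (G.le_square h), fun v ⟨u, hvu⟩ => ⟨C u, ?_⟩⟩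
  refine Set.ncard_eq_one.mpr ⟨u, Set.eq_singleton_iff_unique_mem.mpr ⟨⟨hvu, rfl⟩, ?_⟩⟩
  rintro x ⟨hvx, hx⟩
  by_contra hxu
  exact C.valid ⟨hxu, Or.inr ⟨v, hvx, hvu⟩⟩ hx

theorem IsPCFColoring.ne_of_neighborSet_eq_pair {φ : V → α} (hφ : IsPCFColoring G φ)
    {v a b : V} (hv : G.neighborSet v = {a, b}) (hab : a ≠ b) : φ a ≠ φ b := by
  intro heq
  have hmem {x : V} : G.Adj v x ↔ x = a ∨ x = b := by
    rw [← mem_neighborSet, hv]; rfl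
  obtain ⟨c, hc⟩ := hφ.2 v ⟨a, hmem.mpr (Or.inl rfl)⟩
  obtain ⟨x, hx⟩ := Set.ncard_eq_one.mp hc
  have hxS : x ∈ {u | G.Adj v u ∧ φ u = c} := hx ▸ Set.mem_singleton x
  have hab_c : φ a = c ∧ φ b = c := by
    rcases hmem.mp hxS.1 with rfl | rfl
    exacts [⟨hxS.2, heq ▸ hxS.2⟩, ⟨heq ▸ hxS.2, hxS.2⟩]
  have ha : a ∈ ({x} : Set V) := hx ▸ ⟨hmem.mpr (Or.inl rfl), hab_c.1⟩
  have hb : b ∈ ({x} : Set V) := hx ▸ ⟨hmem.mpr (Or.inr rfl), hab_c.2⟩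
  exact hab (ha.trans hb.symm)

theorem IsPCFColoring.square_adj_ne [Fintype V] [DecidableRel G.Adj] {φ : V → α}
    (hφ : IsPCFColoring G φ) (hΔ : G.maxDegree ≤ 2) {u v : V} (huv : G.square.Adj u v) :
    φ u ≠ φ v := by
  obtain ⟨hne, hadj | ⟨w, hwu, hwv⟩⟩ := huv
  · exact hφ.1 u v hadj
  · refine hφ.ne_of_neighborSet_eq_pair (v := w) (Set.eq_of_subset_of_ncard_le ?_ ?_).symm hne
    · rintro x (rfl | rfl | _) <;> assumption
    · rw [Set.ncard_pair hne, G.ncard_neighborSet_eq_degree]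
      exact (G.degree_le_maxDegree w).trans hΔ

theorem exists_isPCFColoring_fin_maxDegree_sq_add_one [Fintype V] [DecidableRel G.Adj] :
    ∃ φ : V → Fin (G.maxDegree ^ 2 + 1), IsPCFColoring G φ := by
  classical
  obtain ⟨C⟩ :=
    G.square.colorable_maxDegree_add_one.mono (Nat.succ_le_succ G.maxDegree_square_le)
  exact ⟨C, isPCFColoring_of_coloring_square C⟩

theorem pcfChromaticNumber_le_maxDegree_sq_add_one [Fintype V] [DecidableRel G.Adj] :
    pcfChromaticNumber G ≤ G.maxDegree ^ 2 + 1 :=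
  Nat.sInf_le exists_isPCFColoring_fin_maxDegree_sq_add_one

theorem pcfChromaticNumber_le_five [Fintype V] [DecidableRel G.Adj] (hΔ : G.maxDegree ≤ 2) :
    pcfChromaticNumber G ≤ 5 :=
  pcfChromaticNumber_le_maxDegree_sq_add_one.trans
    (Nat.add_le_add_right (Nat.pow_le_pow_left hΔ 2) 1)

theorem pcfChromaticNumber_cycleGraph_five : pcfChromaticNumber (cycleGraph 5) = 5 := by
  refine le_antisymm (pcfChromaticNumber_le_five (maxDegree_cycleGraph_le_two 5)) ?_
  refine le_csInf ⟨_, exists_isPCFColoring_fin_maxDegree_sq_add_one⟩ fun k ⟨φ, hφ⟩ => ?_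
  have hinj : Function.Injective φ := fun u v huv => by
    by_contra hne
    exact hφ.square_adj_ne (maxDegree_cycleGraph_le_two 5)
      (square_cycleGraph_five ▸ (top_adj u v).mpr hne) huv
  simpa using Fintype.card_le_of_injective φ hinj

end PCF

/-- Every (finite) graph of maximum degree at most 2 in which every
component has at least 2 vertices (equivalently, there are no isolated vertices)
satisfies `χ_pcf(G) ≤ 5`; in particular every cycle `Cn` (`n ≥ 3`) satisfies
`χ_pcf(Cn) ≤ 5`, and `χ_pcf(C5) = 5`. -/
theorem pcf_max_degree_two_le_five :
    (∀ (V : Type) (_ : Fintype V) (G : SimpleGraph V),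
      (∀ v : V, (G.neighborSet v).ncard ≤ 2) →
      (∀ v : V, 0 < (G.neighborSet v).ncard) →
      pcfChromaticNumber G ≤ 5) ∧
    (∀ n : ℕ, 3 ≤ n → pcfChromaticNumber (SimpleGraph.cycleGraph n) ≤ 5) ∧
    pcfChromaticNumber (SimpleGraph.cycleGraph 5) = 5 := by
  classical
  refine ⟨fun V _ G hdeg _ => ?_, fun n _ => ?_, pcfChromaticNumber_cycleGraph_five⟩
  · refine pcfChromaticNumber_le_five (G.maxDegree_le_of_forall_degree_le _ fun v => ?_)
    exact G.ncard_neighborSet_eq_degree v ▸ hdeg v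
  · exact pcfChromaticNumber_le_five (SimpleGraph.maxDegree_cycleGraph_le_two n)
end
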